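/- arXiv:math/0605579 — 2 statements merged into one kernel-verified Lean document; each statement's English description precedes it below -/
import Mathlib

section
/- Theorem 14: For every finite graph G, each chain group C^{i,j}(G) of the enhanced-state complex has finite rank, and the graded Euler characteristic Σ_{i,j} (−1)^i q^j rank_ℤ C^{i,j}(G), a well-defined formal series with finitely many positive powers of q, equals J_G(q) = Σ_{s ⊆ E(G)} (−1)^{|s|} q^{|s|} v^{k(s)}, where v denotes the formal series Σ_{d≥0} q^{1−d} (the expansion of q²/(q−1) in powers of q^{−1}). In other words, the graded Euler characteristic of the enhanced-state complex equals the specialization P_G(q, q²/(q−1)) of the dichromatic polynomial corresponding to the Jones polynomial of the associated alternating link. -/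
/-!
Statement 7 (Theorem 14): for every finite graph `G`, each chain group `C^{i,j}(G)` of
the enhanced-state complex has finite rank, and the graded Euler characteristic
`Σ_{i,j} (−1)^i q^j rank_ℤ C^{i,j}(G)` equals
`J_G(q) = Σ_{s ⊆ E(G)} (−1)^{|s|} q^{|s|} v^{k(s)}` with `v = Σ_{d≥0} q^{1−d}`.

Both sides are formal series with finitely many positive powers of `q`; we encode such a
series as a `LaurentSeries ℤ` (a Hahn series over `ℤ`) in the variable `q⁻¹`, i.e. the
coefficient of `q^j` is stored at index `−j`.  In particular `q^j` is
`HahnSeries.single (−j) 1` and `Σ_{d≥0} q^{−d}` is the image of the power series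
`Σ_{d≥0} u^d` under `u ↦ q⁻¹`.
-/

structure MultiGraph where
  V : Type
  E : Type
  finV : Finite V
  finE : Finite E
  ends : E → Sym2 V

attribute [instance] MultiGraph.finV MultiGraph.finE

namespace MultiGraph

def spanning (G : MultiGraph) (s : Set G.E) : SimpleGraph G.V where
  Adj a b := a ≠ b ∧ ∃ e ∈ s, G.ends e = s(a, b)
  symm := by
    constructor
    rintro a b ⟨hab, e, he, h⟩
    exact ⟨hab.symm, e, he, by rw [h, Sym2.eq_swap]⟩
  loopless := by constructor; rintro a ⟨h, -⟩; exact h rfl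

/-- `k(s)`: the number of connected components of the spanning subgraph `[G : s]`. -/
noncomputable def kcomp (G : MultiGraph) (s : Finset G.E) : ℕ :=
  Nat.card (G.spanning ↑s).ConnectedComponent

/-- An enhanced state: a state `s ⊆ E(G)` together with a labelling of the connected
components of `[G : s]` by nonnegative integers. -/
def EState (G : MultiGraph) :=
  Σ s : Finset G.E, ((G.spanning ↑s).ConnectedComponent → ℕ)

/-- `i(S) = |s|`. -/
def iDeg (G : MultiGraph) (S : EState G) : ℕ := S.1.card

/-- `j(S) = |s| + k(s) − |l|` (an integer). -/
noncomputable def jDeg (G : MultiGraph) (S : EState G) : ℤ :=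
  letI := Fintype.ofFinite (G.spanning ↑S.1).ConnectedComponent
  (S.1.card : ℤ) + (G.kcomp S.1 : ℤ) - ∑ c, (S.2 c : ℤ)

/-- `rank_ℤ C^{i,j}(G)`: the number of enhanced states `S` with `i(S) = i`, `j(S) = j`. -/
noncomputable def eRank (G : MultiGraph) (i : ℕ) (j : ℤ) : ℕ :=
  Nat.card {S : EState G // iDeg G S = i ∧ jDeg G S = j}

/-- The series `Σ_{d ≥ 0} q^{−d}` (image of `Σ_{d≥0} u^d` under `u = q⁻¹`). -/
noncomputable def geomQinv : LaurentSeries ℤ :=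
  HahnSeries.ofPowerSeries ℤ ℤ (PowerSeries.mk fun _ => (1 : ℤ))

/-- `J_G(q) = Σ_{s ⊆ E(G)} (−1)^{|s|} q^{|s|} v^{k(s)}` with
`v = Σ_{d≥0} q^{1−d} = q · Σ_{d≥0} q^{−d}`. -/
noncomputable def JG (G : MultiGraph) : LaurentSeries ℤ :=
  letI : Fintype G.E := Fintype.ofFinite G.E
  ∑ s : Finset G.E,
    HahnSeries.single (-(s.card : ℤ)) ((-1 : ℤ) ^ s.card) *
      (HahnSeries.single (-1 : ℤ) (1 : ℤ) * geomQinv) ^ G.kcomp s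

end MultiGraph

/-!
Fix a state `s` and put `N = |s| + k(s) - j`. The labellings `l` of the components of `[G : s]`
with `j(s, l) = j` are the compositions of `N` into `k(s)` nonnegative parts, which are counted by
the coefficient of `u^N` in `(Σ_{d ≥ 0} u^d)^{k(s)}`, that is, by the coefficient of `q^j` in
`q^{|s|} v^{k(s)}`. Weighting by `(-1)^{|s|}` and summing over `s` gives `J_G`; grouping the same
sum by `i = |s|` gives the graded Euler characteristic.
-/

open Finset MultiGraph

section Compositions

variable {ι : Type*} [Fintype ι]

lemma card_fun_sum_eq [DecidableEq ι] (n : ℕ) :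
    Nat.card {l : ι → ℕ // ∑ i, l i = n} = #(piAntidiag (univ : Finset ι) n) := by
  rw [← Nat.card_eq_finsetCard]
  exact Nat.card_congr (Equiv.subtypeEquivRight fun l => by simp)

lemma finite_fun_sum_eq (N : ℤ) : Finite {l : ι → ℕ // ((∑ i, l i : ℕ) : ℤ) = N} := by
  classical
  exact Finite.of_injective (β := piAntidiag (univ : Finset ι) N.toNat)
    (fun l => ⟨l.1, by simp only [mem_piAntidiag, ← l.2, Int.toNat_natCast]; simp⟩)
    fun _ _ h => Subtype.ext (by simpa using h)

lemma coeff_mk_one_pow_card [DecidableEq ι] (n : ℕ) :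
    PowerSeries.coeff n ((PowerSeries.mk fun _ => (1 : ℤ)) ^ Fintype.card ι) =
      #(piAntidiag (univ : Finset ι) n) := by
  rw [← card_univ, ← prod_const, PowerSeries.coeff_prod]
  simp [finsuppAntidiag]

lemma coeff_geomQinv_pow (N : ℤ) :
    (geomQinv ^ Fintype.card ι).coeff N = Nat.card {l : ι → ℕ // ((∑ i, l i : ℕ) : ℤ) = N} := by
  classical
  rw [geomQinv, ← map_pow]
  cases N with
  | ofNat n =>
    rw [Int.ofNat_eq_natCast, HahnSeries.ofPowerSeries_apply_coeff, coeff_mk_one_pow_card,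
      ← card_fun_sum_eq]
    simp only [Nat.cast_inj]
  | negSucc n =>
    have : IsEmpty {l : ι → ℕ // ((∑ i, l i : ℕ) : ℤ) = .negSucc n} := ⟨fun l => by omega⟩
    rw [Nat.card_of_isEmpty, HahnSeries.ofPowerSeries_apply, HahnSeries.embDomain_of_notMem_range]
    · rfl
    · simp

end Compositions

lemma coeff_single_mul_single_mul_pow {R : Type*} [CommRing R] (c k : ℕ) (r : R)
    (x : LaurentSeries R) (j : ℤ) :
    (HahnSeries.single (-(c : ℤ)) r * (HahnSeries.single (-1 : ℤ) (1 : R) * x) ^ k).coeff (-j) =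
      r * (x ^ k).coeff (c + k - j) := by
  rw [mul_pow, HahnSeries.single_pow, one_pow, ← mul_assoc, HahnSeries.single_mul_single, mul_one,
    show -j = (c + k - j) + (-(c : ℤ) + k • (-1 : ℤ)) by simp; ring,
    HahnSeries.coeff_single_mul_add]

lemma finsum_sum_fiberwise {α β M : Type*} [Fintype α] [DecidableEq β] [AddCommMonoid M]
    (g : α → β) (f : α → M) :
    ∑ᶠ b, ∑ a with g a = b, f a = ∑ a, f a := by
  rw [finsum_eq_sum_of_support_subset _ (univ.support_of_fiberwise_sum_subset_image f g),
    sum_fiberwise_of_maps_to fun a _ => mem_image_of_mem g (mem_univ a)]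

namespace MultiGraph

variable (G : MultiGraph)

lemma jDeg_eq_iff {s : Finset G.E} [Fintype (G.spanning ↑s).ConnectedComponent]
    (l : (G.spanning ↑s).ConnectedComponent → ℕ) (j : ℤ) :
    G.jDeg ⟨s, l⟩ = j ↔ ((∑ c, l c : ℕ) : ℤ) = s.card + G.kcomp s - j := by
  obtain rfl := Subsingleton.elim ‹Fintype (G.spanning ↑s).ConnectedComponent› (Fintype.ofFinite _)
  unfold jDeg
  push_cast
  omega

def jDegFiberEquiv (s : Finset G.E) [Fintype (G.spanning ↑s).ConnectedComponent] (j : ℤ) :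
    {l : (G.spanning ↑s).ConnectedComponent → ℕ // G.jDeg ⟨s, l⟩ = j} ≃
      {l : (G.spanning ↑s).ConnectedComponent → ℕ //
        ((∑ c, l c : ℕ) : ℤ) = s.card + G.kcomp s - j} :=
  Equiv.subtypeEquivRight fun l => G.jDeg_eq_iff l j

instance finite_jDegFiber (s : Finset G.E) (j : ℤ) :
    Finite {l : (G.spanning ↑s).ConnectedComponent → ℕ // G.jDeg ⟨s, l⟩ = j} :=
  letI := Fintype.ofFinite (G.spanning ↑s).ConnectedComponent
  haveI := finite_fun_sum_eq (ι := (G.spanning ↑s).ConnectedComponent) (s.card + G.kcomp s - j)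
  Finite.of_equiv _ (G.jDegFiberEquiv s j).symm

lemma natCard_jDegFiber (s : Finset G.E) (j : ℤ) :
    (Nat.card {l : (G.spanning ↑s).ConnectedComponent → ℕ // G.jDeg ⟨s, l⟩ = j} : ℤ) =
      (geomQinv ^ G.kcomp s).coeff (s.card + G.kcomp s - j) := by
  let _ := Fintype.ofFinite (G.spanning ↑s).ConnectedComponent
  rw [Nat.card_congr (G.jDegFiberEquiv s j), ← coeff_geomQinv_pow, kcomp, Nat.card_eq_fintype_card]

def eStateDegreeEquiv (i : ℕ) (j : ℤ) :
    {S : EState G // G.iDeg S = i ∧ G.jDeg S = j} ≃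
      Σ s : {s : Finset G.E // s.card = i},
        {l : (G.spanning ↑s.1).ConnectedComponent → ℕ // G.jDeg ⟨s.1, l⟩ = j} where
  toFun S := ⟨⟨S.1.1, S.2.1⟩, ⟨S.1.2, S.2.2⟩⟩
  invFun x := ⟨⟨x.1.1, x.2.1⟩, ⟨x.1.2, x.2.2⟩⟩

lemma eRank_eq_sum [Fintype G.E] (i : ℕ) (j : ℤ) :
    G.eRank i j = ∑ s : Finset G.E with s.card = i,
      Nat.card {l : (G.spanning ↑s).ConnectedComponent → ℕ // G.jDeg ⟨s, l⟩ = j} := by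
  rw [eRank, Nat.card_congr (G.eStateDegreeEquiv i j), Nat.card_sigma]
  exact (sum_subtype _ (fun s => by simp) fun s => Nat.card {l // G.jDeg ⟨s, l⟩ = j}).symm

lemma coeff_JG [Fintype G.E] (j : ℤ) :
    G.JG.coeff (-j) =
      ∑ s, (-1) ^ s.card * (geomQinv ^ G.kcomp s).coeff (s.card + G.kcomp s - j) := by
  obtain rfl := Subsingleton.elim ‹Fintype G.E› (Fintype.ofFinite _)
  simp only [JG, HahnSeries.coeff_sum, coeff_single_mul_single_mul_pow]

end MultiGraph

/-- Theorem 14: each `C^{i,j}(G)` has finite rank and the graded Euler characteristic of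
the enhanced-state complex equals `J_G(q)` (coefficientwise: the coefficient of `q^j` of
a series is its coefficient at index `−j`). -/
theorem enhanced_euler_char (G : MultiGraph) :
    (∀ (i : ℕ) (j : ℤ), Finite {S : MultiGraph.EState G //
        MultiGraph.iDeg G S = i ∧ MultiGraph.jDeg G S = j}) ∧
    (∀ j : ℤ, ∑ᶠ i : ℕ, (-1 : ℤ) ^ i * (MultiGraph.eRank G i j : ℤ)
        = (MultiGraph.JG G).coeff (-j)) := by
  let _ := Fintype.ofFinite G.E
  refine ⟨fun i j => Finite.of_equiv _ (G.eStateDegreeEquiv i j).symm, fun j => ?_⟩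
  simp only [eRank_eq_sum, Nat.cast_sum, mul_sum, coeff_JG, ← natCard_jDegFiber]
  rw [← finsum_sum_fiberwise card]
  refine finsum_congr fun i => sum_congr rfl fun s hs => ?_
  rw [(mem_filter.1 hs).2]
end

section
/- The per-edge maps of the construction of Section 3.4 preserve the grading, make every square of the cube of resolutions commute, and the resulting signed sums satisfy d^{i+1} ∘ d^i = 0; hence (D_n(G), d) is a chain complex of graded ℤ-modules with grading-preserving differentials, for every finite graph G and every integer n ≤ 2. -/
namespace MultiGraph

/-- The map between component sets induced by enlarging the state. -/
def push (G : MultiGraph) {s s' : Finset G.E} (h : s ⊆ s') :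
    (G.spanning ↑s).ConnectedComponent → (G.spanning ↑s').ConnectedComponent :=
  SimpleGraph.ConnectedComponent.map (SimpleGraph.Hom.ofLE (by
    rintro a b ⟨hne, e, he, hh⟩
    exact ⟨hne, e, h he, hh⟩))

/-- A monomial basis element of the cube of `D_n(G)`: a state `s ⊆ E(G)` together with
a monomial of `ℤ[x_{i_1},…,x_{i_l}]`, encoded by its exponent at (the variable of) each
connected component of `[G : s]`. -/
def MBasis (G : MultiGraph) :=
  Σ s : Finset G.E, ((G.spanning ↑s).ConnectedComponent → ℕ)

/-- The internal degree of a monomial basis element of `M_ε{l(n−1)+|ε|}`: the degree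
shift `k(s)(n−1) + |s|` minus the total degree of the monomial (each variable has
degree `−1`). -/
noncomputable def mdeg (G : MultiGraph) (n : ℤ) (p : MBasis G) : ℤ :=
  letI := Fintype.ofFinite (G.spanning ↑p.1).ConnectedComponent
  (n - 1) * (G.kcomp p.1 : ℤ) + (p.1.card : ℤ) - ∑ c, (p.2 c : ℤ)

/-- The basis element obtained from `(s, μ)` by the per-edge map of the edge `e ∉ s`:
if `e` merges two components `K_p`, `K_q`, the monomial map substitutes `x_{i_p}` for
`x_{i_q}` and multiplies by `x_{i_p}^{2−n}` (so the exponents add up and increase by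
`2−n` on the merged component); if both endpoints of `e` lie in a single component
`K_p`, it is multiplication by `x_{i_p}`. -/
noncomputable def addEdgeM (G : MultiGraph) (n : ℤ) (p : MBasis G) (e : G.E) :
    MBasis G := by
  classical
  exact ⟨insert e p.1, fun c' =>
    letI := Fintype.ofFinite (G.spanning ↑p.1).ConnectedComponent
    (∑ c ∈ Finset.univ.filter
        (fun c => push G (Finset.subset_insert e p.1) c = c'), p.2 c) +
    (if (∃ u ∈ G.ends e, (G.spanning ↑(insert e p.1)).connectedComponentMk u = c')
      then (if (∀ u v : G.V, G.ends e = s(u, v) → (G.spanning ↑p.1).Reachable u v)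
            then 1 else (2 - n).toNat)
      else 0)⟩

/-- The per-edge map of the edge `e`, as an endomorphism of the total module of the
cube (it vanishes on basis elements whose state already contains `e`). -/
noncomputable def perEdge (G : MultiGraph) (n : ℤ) (e : G.E) :
    (MBasis G →₀ ℤ) →ₗ[ℤ] (MBasis G →₀ ℤ) := by
  classical
  exact Finsupp.lift _ ℤ _ (fun p =>
    if e ∈ p.1 then 0 else Finsupp.single (addEdgeM G n p e) (1 : ℤ))

/-- The total differential of `D_n(G)` (w.r.t. an ordering `ord` of the edges). -/
noncomputable def mDiff (G : MultiGraph) (n : ℤ) (ord : G.E ↪ ℕ) :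
    (MBasis G →₀ ℤ) →ₗ[ℤ] (MBasis G →₀ ℤ) := by
  classical
  exact Finsupp.lift _ ℤ _ (fun p =>
    letI : Fintype G.E := Fintype.ofFinite G.E
    ∑ e ∈ Finset.univ.filter (fun e => e ∉ p.1),
      ((-1 : ℤ) ^ (p.1.filter (fun f => ord f < ord e)).card) •
        Finsupp.single (addEdgeM G n p e) (1 : ℤ))

/-- The span of the basis elements with `|s| = i` and internal degree `j`,
i.e. `D_n^{i,j}(G)` inside the total module. -/
noncomputable def mDegSub (G : MultiGraph) (n : ℤ) (i : ℕ) (j : ℤ) :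
    Submodule ℤ (MBasis G →₀ ℤ) :=
  Submodule.span ℤ {x | ∃ p : MBasis G, p.1.card = i ∧ mdeg G n p = j ∧
    x = Finsupp.single p (1 : ℤ)}

end MultiGraph

/-!
Adding an edge `e = uv` to a state `s` either joins two components of `[G : s]`, so that
`k` drops by one and the exponent added is `2 - n`, or it joins two vertices of one component,
so that `k` is unchanged and the exponent added is `1`; either way the internal degree
`(n - 1) k(s) + |s| - deg` is unchanged.

Adding `e` and then `f` pushes the exponents of `[G : s]` forward to the components of
`[G : s ∪ {e, f}]` and adds the exponent of `e` at the component of `e` and that of `f` at the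
component of `f`. These contributions depend on the order only when one edge merges two
components and the other then closes a cycle. In that case both orders give `2 - n` and `1` on the
same component, so the square commutes. Since the signs `(-1)^{#earlier edges}` anticommute
around each square, the terms of `d ∘ d` cancel in pairs.
-/

namespace SimpleGraph
variable {V : Type*} {H : SimpleGraph V} {u v a b : V}

lemma reachable_sup_edge_self : (H ⊔ edge u v).Reachable u v := by
  by_cases h : u = v
  · exact h ▸ .rfl
  · exact Adj.reachable (by simp [edge_adj, h])

lemma reachable_sup_edge_iff :
    (H ⊔ edge u v).Reachable a b ↔ H.Reachable a b ∨ (H.Reachable a u ∧ H.Reachable v b) ∨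
      (H.Reachable a v ∧ H.Reachable u b) := by
  constructor
  · rintro ⟨w⟩
    induction w with
    | nil => exact .inl .rfl
    | cons hadj _ ih =>
      rw [sup_adj, edge_adj] at hadj
      rcases hadj with h | ⟨⟨rfl, rfl⟩ | ⟨rfl, rfl⟩, -⟩
      · have := h.reachable
        grind [Reachable.trans]
      · grind [Reachable.refl, Reachable.trans, Reachable.symm]
      · grind [Reachable.refl, Reachable.trans, Reachable.symm]
  · have hle : H ≤ H ⊔ edge u v := le_sup_left
    rintro (h | ⟨h1, h2⟩ | ⟨h1, h2⟩)
    · exact h.mono hle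
    · exact ((h1.mono hle).trans reachable_sup_edge_self).trans (h2.mono hle)
    · exact ((h1.mono hle).trans reachable_sup_edge_self.symm).trans (h2.mono hle)

lemma reachable_sup_edge_iff_of_reachable (huv : H.Reachable u v) :
    (H ⊔ edge u v).Reachable a b ↔ H.Reachable a b := by
  rw [reachable_sup_edge_iff]
  grind [Reachable.trans, Reachable.symm]

lemma card_connectedComponent_sup_edge_of_reachable (huv : H.Reachable u v) :
    Nat.card (H ⊔ edge u v).ConnectedComponent = Nat.card H.ConnectedComponent := by
  have hR : (H ⊔ edge u v).Reachable = H.Reachable :=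
    funext₂ fun _ _ => propext (reachable_sup_edge_iff_of_reachable huv)
  unfold ConnectedComponent
  rw [hR]

lemma card_connectedComponent_sup_edge_add_one [Finite V] (huv : ¬ H.Reachable u v) :
    Nat.card (H ⊔ edge u v).ConnectedComponent + 1 = Nat.card H.ConnectedComponent := by
  let φ : {c : H.ConnectedComponent // c ≠ H.connectedComponentMk v} →
      (H ⊔ edge u v).ConnectedComponent := fun c =>
    c.1.map (Hom.ofLE le_sup_left)
  have hφ : Function.Bijective φ := by
    constructor
    · rintro ⟨c₁, hc₁⟩ ⟨c₂, hc₂⟩ h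
      induction c₁ using ConnectedComponent.ind
      induction c₂ using ConnectedComponent.ind
      simp only [φ, ConnectedComponent.map_mk, Hom.ofLE_apply, ConnectedComponent.eq,
        reachable_sup_edge_iff, ne_eq] at h hc₁ hc₂
      simp only [Subtype.mk.injEq, ConnectedComponent.eq]
      grind [Reachable.symm]
    · intro c
      induction c using ConnectedComponent.ind with | h b => ?_
      by_cases hb : H.Reachable b v
      · refine ⟨⟨H.connectedComponentMk u, fun h => huv (ConnectedComponent.eq.1 h)⟩, ?_⟩
        simp only [φ, ConnectedComponent.map_mk, Hom.ofLE_apply, ConnectedComponent.eq]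
        exact reachable_sup_edge_self.trans ((hb.mono le_sup_left).symm)
      · exact ⟨⟨H.connectedComponentMk b, fun h => hb (ConnectedComponent.eq.1 h)⟩, rfl⟩
  classical
  rw [← Nat.card_eq_of_bijective φ hφ, ← Finite.card_option,
    Nat.card_congr (Equiv.optionSubtypeNe _)]

lemma reachable_sup_edge_exchange {c d : V} (hab : ¬ H.Reachable a b)
    (h : (H ⊔ edge c d).Reachable a b) :
    ¬ H.Reachable c d ∧ (H ⊔ edge a b).Reachable c d ∧
      (H ⊔ edge a b ⊔ edge c d).Reachable a c := by
  have hle : H ⊔ edge a b ≤ H ⊔ edge a b ⊔ edge c d := le_sup_left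
  rw [reachable_sup_edge_iff] at h
  rcases h with h | ⟨hac, hdb⟩ | ⟨had, hcb⟩
  · exact absurd h hab
  · refine ⟨fun hcd => hab ((hac.trans hcd).trans hdb), ?_, hac.mono (le_sup_left.trans hle)⟩
    exact reachable_sup_edge_iff.2 (.inr (.inl ⟨hac.symm, hdb.symm⟩))
  · refine ⟨fun hcd => hab ((had.trans hcd.symm).trans hcb), ?_, ?_⟩
    · exact reachable_sup_edge_iff.2 (.inr (.inr ⟨hcb, had⟩))
    · exact (had.mono (le_sup_left.trans hle)).trans reachable_sup_edge_self.symm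

end SimpleGraph

lemma Finset.sum_sum_eq_zero_of_antisymm {ι M : Type*} [AddCommGroup M] [IsAddTorsionFree M]
    (s : Finset ι) (T : ι → ι → M) (hT : ∀ i j, T j i = -T i j) :
    ∑ i ∈ s, ∑ j ∈ s, T i j = 0 := by
  rw [← self_eq_neg]
  calc ∑ i ∈ s, ∑ j ∈ s, T i j = ∑ i ∈ s, ∑ j ∈ s, -T i j := by
        rw [Finset.sum_comm]
        exact Finset.sum_congr rfl fun i _ => Finset.sum_congr rfl fun j _ => hT i j
    _ = _ := by simp only [Finset.sum_neg_distrib]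

namespace MultiGraph
open SimpleGraph Finset
open scoped Classical
-- The definitions above sum over component types through `Fintype.ofFinite`; preferring it
-- keeps the sums written here syntactically equal to theirs.
attribute [local instance high] Fintype.ofFinite

noncomputable def edgeExponent (n : ℤ) {V : Type*} (H : SimpleGraph V) (u v : V) : ℕ :=
  if H.Reachable u v then 1 else (2 - n).toNat

lemma edgeExponent_square (n : ℤ) {V : Type*} (H : SimpleGraph V) (a b c d w : V) :
    (if (H ⊔ edge a b ⊔ edge c d).Reachable a w then edgeExponent n H a b else 0) +
      (if (H ⊔ edge a b ⊔ edge c d).Reachable c w then edgeExponent n (H ⊔ edge a b) c d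
        else 0) =
    (if (H ⊔ edge a b ⊔ edge c d).Reachable c w then edgeExponent n H c d else 0) +
      (if (H ⊔ edge a b ⊔ edge c d).Reachable a w then edgeExponent n (H ⊔ edge c d) a b
        else 0) := by
  by_cases hab : ¬ H.Reachable a b ∧ (H ⊔ edge c d).Reachable a b
  · obtain ⟨hcd, hcd', hac⟩ := reachable_sup_edge_exchange hab.1 hab.2
    have hw : (H ⊔ edge a b ⊔ edge c d).Reachable a w ↔
        (H ⊔ edge a b ⊔ edge c d).Reachable c w :=
      ⟨hac.symm.trans, hac.trans⟩
    simp only [edgeExponent, hab, hcd, hcd', hw]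
  by_cases hcd : ¬ H.Reachable c d ∧ (H ⊔ edge a b).Reachable c d
  · obtain ⟨hab', hab'', hca⟩ := reachable_sup_edge_exchange hcd.1 hcd.2
    rw [sup_right_comm] at hca
    have hw : (H ⊔ edge a b ⊔ edge c d).Reachable a w ↔
        (H ⊔ edge a b ⊔ edge c d).Reachable c w :=
      ⟨hca.trans, hca.symm.trans⟩
    simp only [edgeExponent, hcd, hab', hab'', hw]
  have hab' : (H ⊔ edge c d).Reachable a b ↔ H.Reachable a b :=
    ⟨fun h => by_contra fun h' => hab ⟨h', h⟩, fun h => h.mono le_sup_left⟩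
  have hcd' : (H ⊔ edge a b).Reachable c d ↔ H.Reachable c d :=
    ⟨fun h => by_contra fun h' => hcd ⟨h', h⟩, fun h => h.mono le_sup_left⟩
  simp only [edgeExponent, hab', hcd']
  exact add_comm _ _

variable {G : MultiGraph} {n : ℤ} {s t : Finset G.E} {e f : G.E} {u v : G.V}

lemma exists_ends_eq (G : MultiGraph) (e : G.E) : ∃ u v, G.ends e = s(u, v) :=
  Sym2.ind (fun u v => ⟨u, v, rfl⟩) (G.ends e)

lemma spanning_insert (he : G.ends e = s(u, v)) :
    G.spanning ↑(insert e s) = G.spanning ↑s ⊔ edge u v := by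
  ext a b
  simp only [spanning, sup_adj, edge_adj, coe_insert, Set.mem_insert_iff, mem_coe]
  constructor
  · rintro ⟨hab, g, rfl | hg, hends⟩
    · rw [he, eq_comm, Sym2.eq_iff] at hends
      exact .inr ⟨hends, hab⟩
    · exact .inl ⟨hab, g, hg, hends⟩
  · rintro (⟨hab, g, hg, hends⟩ | ⟨hends, hab⟩)
    · exact ⟨hab, g, .inr hg, hends⟩
    · exact ⟨hab, e, .inl rfl, by rw [he, eq_comm, Sym2.eq_iff]; exact hends⟩

lemma kcomp_insert (he : G.ends e = s(u, v)) :
    G.kcomp (insert e s) = Nat.card (G.spanning ↑s ⊔ edge u v).ConnectedComponent := by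
  rw [kcomp, spanning_insert he]

lemma push_mk (h : s ⊆ t) (a : G.V) :
    G.push h ((G.spanning ↑s).connectedComponentMk a) =
      (G.spanning ↑t).connectedComponentMk a :=
  rfl

lemma forall_ends_reachable_iff (he : G.ends e = s(u, v)) :
    (∀ a b, G.ends e = s(a, b) → (G.spanning ↑s).Reachable a b) ↔
      (G.spanning ↑s).Reachable u v := by
  refine ⟨fun h => h u v he, fun h a b hab => ?_⟩
  rw [he, Sym2.eq_iff] at hab
  rcases hab with ⟨rfl, rfl⟩ | ⟨rfl, rfl⟩
  exacts [h, h.symm]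

lemma exists_ends_mk_eq_iff (he : G.ends e = s(u, v))
    (c : (G.spanning ↑(insert e s)).ConnectedComponent) :
    (∃ a ∈ G.ends e, (G.spanning ↑(insert e s)).connectedComponentMk a = c) ↔
      (G.spanning ↑(insert e s)).connectedComponentMk u = c := by
  have huv : (G.spanning ↑(insert e s)).connectedComponentMk v =
      (G.spanning ↑(insert e s)).connectedComponentMk u := by
    rw [ConnectedComponent.eq, spanning_insert he]
    exact reachable_sup_edge_self.symm
  rw [he]
  simp [Sym2.mem_iff, huv]

lemma addEdgeM_fst (p : MBasis G) (e : G.E) : (addEdgeM G n p e).1 = insert e p.1 := rfl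

lemma addEdgeM_snd {p : MBasis G} (he : G.ends e = s(u, v))
    (c : (G.spanning ↑(insert e p.1)).ConnectedComponent) :
    (addEdgeM G n p e).2 c =
      (∑ b ∈ univ.filter (fun b => G.push (subset_insert e p.1) b = c), p.2 b) +
        if (G.spanning ↑(insert e p.1)).connectedComponentMk u = c then
          edgeExponent n (G.spanning ↑p.1) u v else 0 := by
  simp only [addEdgeM, edgeExponent, exists_ends_mk_eq_iff he, forall_ends_reachable_iff he]
  -- the two sides now differ only in their `Decidable` instances
  congr

lemma sum_addEdgeM_snd {p : MBasis G} (he : G.ends e = s(u, v)) :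
    ∑ c : (G.spanning ↑(insert e p.1)).ConnectedComponent, (addEdgeM G n p e).2 c =
      ∑ b, p.2 b + edgeExponent n (G.spanning ↑p.1) u v := by
  refine (sum_congr rfl fun c _ => addEdgeM_snd he c).trans ?_
  -- The fibres in `addEdgeM` are decided by `Classical.propDecidable`, which `rw` cannot
  -- recover from the `DecidableEq` argument of `sum_fiberwise` by unification.
  rw [sum_add_distrib, @sum_fiberwise _ _ _ _ (fun _ _ => Classical.propDecidable _),
    sum_ite_eq, if_pos (mem_univ _)]

lemma mdeg_addEdgeM (hn : n ≤ 2) {p : MBasis G} (he : e ∉ p.1) :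
    mdeg G n (addEdgeM G n p e) = mdeg G n p := by
  obtain ⟨u, v, huv⟩ := G.exists_ends_eq e
  have hsum :
      ∑ c : (G.spanning ↑(insert e p.1)).ConnectedComponent, ((addEdgeM G n p e).2 c : ℤ) =
        ∑ b, (p.2 b : ℤ) + edgeExponent n (G.spanning ↑p.1) u v := by
    have h := congrArg (Nat.cast : ℕ → ℤ) (sum_addEdgeM_snd (n := n) (p := p) huv)
    push_cast at h
    exact (Nat.cast_sum _ _).symm.trans h
  show (n - 1) * (G.kcomp (insert e p.1) : ℤ) + ((insert e p.1).card : ℤ) -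
    ∑ c : (G.spanning ↑(insert e p.1)).ConnectedComponent, ((addEdgeM G n p e).2 c : ℤ) =
      (n - 1) * (G.kcomp p.1 : ℤ) + (p.1.card : ℤ) - ∑ c, (p.2 c : ℤ)
  rw [hsum, card_insert_of_notMem he, kcomp_insert huv]
  by_cases h : (G.spanning ↑p.1).Reachable u v
  · rw [card_connectedComponent_sup_edge_of_reachable h, kcomp, edgeExponent, if_pos h]
    push_cast
    ring
  · rw [kcomp, ← card_connectedComponent_sup_edge_add_one h, edgeExponent, if_neg h,
      Int.toNat_of_nonneg (by omega)]
    push_cast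
    ring

lemma MBasis.ext {p q : MBasis G} (h₁ : p.1 = q.1)
    (h₂ : ∀ w, p.2 ((G.spanning ↑p.1).connectedComponentMk w) =
      q.2 ((G.spanning ↑q.1).connectedComponentMk w)) : p = q := by
  obtain ⟨s, μ⟩ := p
  obtain ⟨t, ν⟩ := q
  obtain rfl : s = t := h₁
  congr 1
  funext c
  induction c using ConnectedComponent.ind with | h w => exact h₂ w

lemma push_push_eq_mk_iff {r : Finset G.E} (hst : s ⊆ t) (htr : t ⊆ r)
    (b : (G.spanning ↑s).ConnectedComponent) (w : G.V) :
    G.push htr (G.push hst b) = (G.spanning ↑r).connectedComponentMk w ↔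
      (G.spanning ↑r).Reachable b.out w := by
  conv_lhs => rw [← b.out_eq]
  exact ConnectedComponent.eq

lemma addEdgeM_addEdgeM_snd_mk {p : MBasis G} {ue ve uf vf : G.V} (he : G.ends e = s(ue, ve))
    (hf : G.ends f = s(uf, vf)) (w : G.V) :
    (addEdgeM G n (addEdgeM G n p e) f).2
        ((G.spanning ↑(insert f (insert e p.1))).connectedComponentMk w) =
      (∑ b ∈ univ.filter (fun b => (G.spanning ↑(insert f (insert e p.1))).Reachable b.out w),
          p.2 b) +
        (if (G.spanning ↑(insert f (insert e p.1))).Reachable ue w then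
          edgeExponent n (G.spanning ↑p.1) ue ve else 0) +
        (if (G.spanning ↑(insert f (insert e p.1))).Reachable uf w then
          edgeExponent n (G.spanning ↑(insert e p.1)) uf vf else 0) := by
  calc (addEdgeM G n (addEdgeM G n p e) f).2
        ((G.spanning ↑(insert f (insert e p.1))).connectedComponentMk w)
      = (∑ c ∈ univ.filter (fun c => G.push (subset_insert f (insert e p.1)) c =
            (G.spanning ↑(insert f (insert e p.1))).connectedComponentMk w),
            (addEdgeM G n p e).2 c) +
        (if (G.spanning ↑(insert f (insert e p.1))).connectedComponentMk uf =
            (G.spanning ↑(insert f (insert e p.1))).connectedComponentMk w then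
          edgeExponent n (G.spanning ↑(insert e p.1)) uf vf else 0) := addEdgeM_snd hf _
    _ = _ := by
      rw [sum_congr rfl fun c _ => addEdgeM_snd he c, sum_add_distrib,
        @sum_fiberwise_eq_sum_filter _ _ _ _ (fun _ _ => Classical.propDecidable _), sum_ite_eq]
      simp only [mem_filter, mem_univ, true_and, push_mk, push_push_eq_mk_iff,
        ConnectedComponent.eq]
      congr

lemma addEdgeM_comm (p : MBasis G) (e f : G.E) :
    addEdgeM G n (addEdgeM G n p e) f = addEdgeM G n (addEdgeM G n p f) e := by
  obtain ⟨ue, ve, he⟩ := G.exists_ends_eq e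
  obtain ⟨uf, vf, hf⟩ := G.exists_ends_eq f
  refine MBasis.ext (insert_comm f e p.1) fun w => (addEdgeM_addEdgeM_snd_mk he hf w).trans
    (Eq.trans ?_ (addEdgeM_addEdgeM_snd_mk hf he w).symm)
  rw [insert_comm e f p.1, spanning_insert (s := insert e p.1) hf, spanning_insert he,
    spanning_insert (s := p.1) hf, add_assoc, add_assoc]
  congr 1
  convert edgeExponent_square n (G.spanning ↑p.1) ue ve uf vf w

lemma mem_addEdgeM_fst {p : MBasis G} : f ∈ (addEdgeM G n p e).1 ↔ f = e ∨ f ∈ p.1 :=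
  mem_insert

lemma perEdge_single (p : MBasis G) (e : G.E) :
    perEdge G n e (Finsupp.single p 1) =
      if e ∈ p.1 then 0 else Finsupp.single (addEdgeM G n p e) 1 := by
  rw [perEdge, Finsupp.lift_apply, Finsupp.sum_single_index (by simp), one_smul]

lemma perEdge_perEdge_single_eq_zero {p : MBasis G} (h : e = f ∨ e ∈ p.1 ∨ f ∈ p.1) :
    perEdge G n f (perEdge G n e (Finsupp.single p 1)) = 0 := by
  rw [perEdge_single]
  split_ifs with he
  · exact map_zero _
  · rw [perEdge_single, if_pos (mem_addEdgeM_fst.2 (by tauto))]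

lemma perEdge_comm (G : MultiGraph) (n : ℤ) (e f : G.E) :
    (perEdge G n f).comp (perEdge G n e) = (perEdge G n e).comp (perEdge G n f) := by
  refine Finsupp.basisSingleOne.ext fun p => ?_
  simp only [Finsupp.coe_basisSingleOne, LinearMap.comp_apply]
  by_cases h : e = f ∨ e ∈ p.1 ∨ f ∈ p.1
  · rw [perEdge_perEdge_single_eq_zero h, perEdge_perEdge_single_eq_zero (by tauto)]
  push Not at h
  obtain ⟨hef, he, hf⟩ := h
  rw [perEdge_single p e, perEdge_single p f, if_neg he, if_neg hf, perEdge_single,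
    perEdge_single, addEdgeM_comm, if_neg (by simp [mem_addEdgeM_fst, hf, Ne.symm hef]),
    if_neg (by simp [mem_addEdgeM_fst, he, hef])]

def edgeSign (ord : G.E ↪ ℕ) (s : Finset G.E) (e : G.E) : ℤ :=
  (-1) ^ (s.filter (fun f => ord f < ord e)).card

lemma edgeSign_insert (ord : G.E ↪ ℕ) (he : e ∉ s) :
    edgeSign ord (insert e s) f = (if ord e < ord f then -1 else 1) * edgeSign ord s f := by
  rw [edgeSign, edgeSign, filter_insert]
  split_ifs
  · rw [card_insert_of_notMem (fun h => he (mem_filter.1 h).1), pow_succ, mul_comm]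
  · rw [one_mul]

lemma edgeSign_mul_edgeSign_insert (ord : G.E ↪ ℕ) (hef : e ≠ f) (he : e ∉ s)
    (hf : f ∉ s) :
    edgeSign ord s e * edgeSign ord (insert e s) f =
      -(edgeSign ord s f * edgeSign ord (insert f s) e) := by
  rw [edgeSign_insert ord he, edgeSign_insert ord hf]
  rcases lt_or_gt_of_ne (ord.injective.ne hef) with h | h
  · rw [if_pos h, if_neg h.not_gt]
    ring
  · rw [if_neg h.not_gt, if_pos h]
    ring

lemma mDiff_single (ord : G.E ↪ ℕ) (p : MBasis G) :
    mDiff G n ord (Finsupp.single p 1) =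
      ∑ e, edgeSign ord p.1 e • perEdge G n e (Finsupp.single p 1) := by
  rw [mDiff, Finsupp.lift_apply, Finsupp.sum_single_index (by simp), one_smul, sum_filter]
  refine sum_congr rfl fun e _ => ?_
  rw [perEdge_single]
  split_ifs <;> simp [edgeSign]

lemma mDiff_mDiff_single (ord : G.E ↪ ℕ) (p : MBasis G) :
    mDiff G n ord (mDiff G n ord (Finsupp.single p 1)) =
      ∑ e, ∑ f, (edgeSign ord p.1 e * edgeSign ord (insert e p.1) f) •
        perEdge G n f (perEdge G n e (Finsupp.single p 1)) := by
  rw [mDiff_single, map_sum]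
  refine sum_congr rfl fun e _ => ?_
  rw [map_smul, perEdge_single]
  split_ifs
  · simp
  · rw [mDiff_single, smul_sum]
    refine sum_congr rfl fun f _ => ?_
    rw [smul_smul]
    rfl

lemma mDiff_comp_mDiff (G : MultiGraph) (n : ℤ) (ord : G.E ↪ ℕ) :
    (mDiff G n ord).comp (mDiff G n ord) = 0 := by
  refine Finsupp.basisSingleOne.ext fun p => ?_
  simp only [Finsupp.coe_basisSingleOne, LinearMap.comp_apply, LinearMap.zero_apply]
  rw [mDiff_mDiff_single]
  refine sum_sum_eq_zero_of_antisymm _ _ fun e f => ?_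
  by_cases h : e = f ∨ e ∈ p.1 ∨ f ∈ p.1
  · rw [perEdge_perEdge_single_eq_zero h, perEdge_perEdge_single_eq_zero (by tauto), smul_zero,
      smul_zero, neg_zero]
  push Not at h
  obtain ⟨hef, he, hf⟩ := h
  rw [← LinearMap.comp_apply (perEdge G n e), ← perEdge_comm, LinearMap.comp_apply,
    edgeSign_mul_edgeSign_insert ord hef he hf, neg_smul, neg_neg]

lemma map_mDegSub_le {i : ℕ} {j : ℤ}
    {T : (MBasis G →₀ ℤ) →ₗ[ℤ] (MBasis G →₀ ℤ)}
    {N : Submodule ℤ (MBasis G →₀ ℤ)}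
    (hT : ∀ p : MBasis G, p.1.card = i → mdeg G n p = j → T (Finsupp.single p 1) ∈ N) :
    (mDegSub G n i j).map T ≤ N := by
  rw [mDegSub, Submodule.map_span_le]
  rintro _ ⟨p, hi, hj, rfl⟩
  exact hT p hi hj

lemma perEdge_single_mem_mDegSub (hn : n ≤ 2) {p : MBasis G} {i : ℕ} {j : ℤ}
    (hi : p.1.card = i) (hj : mdeg G n p = j) :
    perEdge G n e (Finsupp.single p 1) ∈ mDegSub G n (i + 1) j := by
  rw [perEdge_single]
  split_ifs with he
  · exact zero_mem _
  · exact Submodule.subset_span ⟨addEdgeM G n p e,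
      by rw [addEdgeM_fst, card_insert_of_notMem he, hi], by rw [mdeg_addEdgeM hn he, hj], rfl⟩

lemma mDiff_single_mem_mDegSub (hn : n ≤ 2) (ord : G.E ↪ ℕ) {p : MBasis G} {i : ℕ} {j : ℤ}
    (hi : p.1.card = i) (hj : mdeg G n p = j) :
    mDiff G n ord (Finsupp.single p 1) ∈ mDegSub G n (i + 1) j := by
  rw [mDiff_single]
  exact sum_mem fun e _ => Submodule.smul_mem _ _ (perEdge_single_mem_mDegSub hn hi hj)

end MultiGraph

open MultiGraph in
/-- the per-edge maps of the construction of Section 3.4 preserve the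
grading, make every square of the cube of resolutions commute, and the signed sums
satisfy `d ∘ d = 0`; hence `(D_n(G), d)` is a chain complex of graded ℤ-modules with
grading-preserving differentials, for every finite graph `G` and integer `n ≤ 2`. -/
theorem mcube_chain_complex (G : MultiGraph) (n : ℤ) (hn : n ≤ 2) :
    -- the per-edge maps preserve the grading (raising the cube degree by one):
    (∀ (e : G.E) (i : ℕ) (j : ℤ),
      (mDegSub G n i j).map (perEdge G n e) ≤ mDegSub G n (i + 1) j) ∧
    -- every square of the cube commutes:
    (∀ (e f : G.E), e ≠ f → ∀ p : MBasis G, e ∉ p.1 → f ∉ p.1 →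
      perEdge G n f (perEdge G n e (Finsupp.single p (1 : ℤ)))
        = perEdge G n e (perEdge G n f (Finsupp.single p (1 : ℤ)))) ∧
    -- the signed sums give a differential:
    (∀ ord : G.E ↪ ℕ, (mDiff G n ord).comp (mDiff G n ord) = 0) ∧
    -- which is grading preserving:
    (∀ (ord : G.E ↪ ℕ) (i : ℕ) (j : ℤ),
      (mDegSub G n i j).map (mDiff G n ord) ≤ mDegSub G n (i + 1) j) :=
  ⟨fun _ _ _ => map_mDegSub_le fun _ hi hj => perEdge_single_mem_mDegSub hn hi hj,
    fun e f _ p _ _ => LinearMap.congr_fun (perEdge_comm G n e f) (Finsupp.single p 1),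
    mDiff_comp_mDiff G n,
    fun ord _ _ => map_mDegSub_le fun _ hi hj => mDiff_single_mem_mDegSub hn ord hi hj⟩
end
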